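/- arXiv:1112.2310 — 5 statements merged into one kernel-verified Lean document; each statement's English description precedes it below -/
import Mathlib

section
/- Let H = (V, E) be an ℓ-uniform hypergraph and b, c natural numbers with 1 ≤ b ≤ ℓ such that every pair of distinct hyperedges in H intersects in at most ℓ − b vertices. If H contains more than ℓ! · c^(ℓ+1−b) hyperedges, then H contains a sunflower with more than c petals. -/
/-- A sunflower with core `C`: every pair of distinct hyperedges in `P`
intersects in exactly the set `C`. -/
def IsSunflower {α : Type*} [DecidableEq α] (P : Finset (Finset α)) (C : Finset α) : Prop :=
  ∀ e ∈ P, ∀ f ∈ P, e ≠ f → e ∩ f = C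

lemma refined_sunflower_aux {α : Type*} [DecidableEq α] (b c : ℕ) (hb1 : 1 ≤ b) :
    ∀ k (E : Finset (Finset α)),
      (∀ e ∈ E, e.card = b + k) →
      (∀ e ∈ E, ∀ f ∈ E, e ≠ f → (e ∩ f).card ≤ k) →
      E.card > (b + k).factorial * c ^ (k + 1) →
      ∃ P ⊆ E, ∃ C : Finset α, IsSunflower P C ∧ P.card > c := by
  intro k
  induction k with
  | zero =>
    intro E huni hint hcard
    refine ⟨E, subset_rfl, ∅, ?_, ?_⟩
    · intro e he f hf hef
      have h := hint e he f hf hef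
      exact Finset.card_eq_zero.mp (Nat.le_antisymm h (Nat.zero_le _))
    · have h1 : 0 < (b + 0).factorial := Nat.factorial_pos _
      calc c = c ^ (0 + 1) := (pow_one c).symm
        _ ≤ (b + 0).factorial * c ^ (0 + 1) := Nat.le_mul_of_pos_left _ h1
        _ < E.card := hcard
  | succ k ih =>
    intro E huni hint hcard
    set ℓ := b + (k + 1) with hℓ
    have hℓpos : 1 ≤ ℓ := by omega
    -- c = 0 case
    rcases Nat.eq_zero_or_pos c with hc0 | hcpos
    · have hne : E.Nonempty := Finset.card_pos.mp (lt_of_le_of_lt (Nat.zero_le _) hcard)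
      obtain ⟨e, he⟩ := hne
      refine ⟨{e}, by simpa using he, ∅, ?_, by simp [hc0]⟩
      intro a ha b' hb' hab
      simp only [Finset.mem_singleton] at ha hb'
      exact absurd (ha.trans hb'.symm) hab
    -- maximal pairwise-disjoint subfamily M
    classical
    set S := E.powerset.filter (fun M => ∀ e ∈ M, ∀ f ∈ M, e ≠ f → e ∩ f = ∅) with hS
    have hSne : S.Nonempty := ⟨∅, by simp [hS]⟩
    obtain ⟨M, hMS, hMmax⟩ := S.exists_max_image Finset.card hSne
    simp only [hS, Finset.mem_filter, Finset.mem_powerset] at hMS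
    obtain ⟨hME, hMdisj⟩ := hMS
    by_cases hMc : c < M.card
    · exact ⟨M, hME, ∅, hMdisj, hMc⟩
    push_neg at hMc
    -- every edge meets U := union of M
    set U := M.biUnion id with hU
    have hmeet : ∀ e ∈ E, ∃ x ∈ U, x ∈ e := by
      intro e he
      by_contra hcon
      push_neg at hcon
      have heM : e ∉ M := by
        intro heM
        have : e.card = ℓ := huni e he
        have hene : e.Nonempty := Finset.card_pos.mp (by omega)
        obtain ⟨x, hx⟩ := hene
        exact hcon x (Finset.mem_biUnion.mpr ⟨e, heM, hx⟩) hx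
      have hdisj : ∀ f ∈ M, e ∩ f = ∅ := by
        intro f hf
        ext x
        simp only [Finset.mem_inter, Finset.notMem_empty, iff_false, not_and]
        intro hxe hxf
        exact hcon x (Finset.mem_biUnion.mpr ⟨f, hf, hxf⟩) hxe
      have hmem : insert e M ∈ S := by
        simp only [hS, Finset.mem_filter, Finset.mem_powerset]
        refine ⟨Finset.insert_subset he hME, ?_⟩
        intro a ha b' hb' hab
        rcases Finset.mem_insert.mp ha with h1 | h1 <;>
          rcases Finset.mem_insert.mp hb' with h2 | h2
        · exact absurd (h1.trans h2.symm) hab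
        · subst h1; exact hdisj b' h2
        · subst h2; rw [Finset.inter_comm]; exact hdisj a h1
        · exact hMdisj a h1 b' h2 hab
      have := hMmax _ hmem
      rw [Finset.card_insert_of_notMem heM] at this
      omega
    -- |U| ≤ c * ℓ
    have hUcard : U.card ≤ c * ℓ := by
      calc U.card ≤ ∑ e ∈ M, (id e).card := Finset.card_biUnion_le
        _ = ∑ e ∈ M, ℓ := Finset.sum_congr rfl (fun e he => huni e (hME he))
        _ = M.card * ℓ := by rw [Finset.sum_const, smul_eq_mul]
        _ ≤ c * ℓ := Nat.mul_le_mul_right ℓ hMc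
    -- pigeonhole: some vertex of high degree
    have hsub : E ⊆ U.biUnion (fun x => E.filter (fun e => x ∈ e)) := by
      intro e he
      obtain ⟨x, hxU, hxe⟩ := hmeet e he
      exact Finset.mem_biUnion.mpr ⟨x, hxU, Finset.mem_filter.mpr ⟨he, hxe⟩⟩
    have hEsum : E.card ≤ ∑ x ∈ U, (E.filter (fun e => x ∈ e)).card :=
      le_trans (Finset.card_le_card hsub) Finset.card_biUnion_le
    have hdeg : ∃ x ∈ U, (b + k).factorial * c ^ (k + 1) <
        (E.filter (fun e => x ∈ e)).card := by
      by_contra hcon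
      push_neg at hcon
      have hsum : ∑ x ∈ U, (E.filter (fun e => x ∈ e)).card ≤
          U.card * ((b + k).factorial * c ^ (k + 1)) := by
        calc ∑ x ∈ U, (E.filter (fun e => x ∈ e)).card
            ≤ ∑ _x ∈ U, (b + k).factorial * c ^ (k + 1) :=
              Finset.sum_le_sum (fun x hx => hcon x hx)
          _ = U.card * ((b + k).factorial * c ^ (k + 1)) := by
              rw [Finset.sum_const, smul_eq_mul]
      have hbig : U.card * ((b + k).factorial * c ^ (k + 1)) ≤
          ℓ.factorial * c ^ (k + 2) := by
        calc U.card * ((b + k).factorial * c ^ (k + 1))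
            ≤ (c * ℓ) * ((b + k).factorial * c ^ (k + 1)) :=
              Nat.mul_le_mul_right _ hUcard
          _ = (ℓ * (b + k).factorial) * (c * c ^ (k + 1)) := by ring
          _ = ℓ.factorial * c ^ (k + 2) := by
              rw [hℓ]
              rw [show b + (k + 1) = (b + k) + 1 from by omega, Nat.factorial_succ]
              ring
      have : E.card ≤ ℓ.factorial * c ^ (k + 2) :=
        le_trans hEsum (le_trans hsum hbig)
      have hcard' : E.card > ℓ.factorial * c ^ (k + 2) := by
        simpa [hℓ, show k + 1 + 1 = k + 2 from rfl] using hcard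
      omega
    obtain ⟨x, hxU, hxdeg⟩ := hdeg
    -- restricted hypergraph
    set Ex := E.filter (fun e => x ∈ e) with hEx
    set E' := Ex.image (fun e => e.erase x) with hE'
    have hmemEx : ∀ e ∈ Ex, e ∈ E ∧ x ∈ e := by
      intro e he; exact Finset.mem_filter.mp he
    have hinj : Set.InjOn (fun e : Finset α => e.erase x) ↑Ex := by
      intro a ha b' hb' hab
      have hxa := (hmemEx a (Finset.mem_coe.mp ha)).2
      have hxb := (hmemEx b' (Finset.mem_coe.mp hb')).2
      have hab' : a.erase x = b'.erase x := hab
      have : insert x (a.erase x) = insert x (b'.erase x) := by rw [hab']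
      rwa [Finset.insert_erase hxa, Finset.insert_erase hxb] at this
    have hE'card : E'.card = Ex.card := Finset.card_image_of_injOn hinj
    have huni' : ∀ a ∈ E', a.card = b + k := by
      intro a ha
      obtain ⟨e, he, rfl⟩ := Finset.mem_image.mp ha
      obtain ⟨heE, hxe⟩ := hmemEx e he
      rw [Finset.card_erase_of_mem hxe, huni e heE]
      omega
    have hint' : ∀ a ∈ E', ∀ f ∈ E', a ≠ f → (a ∩ f).card ≤ k := by
      intro a ha f hf haf
      obtain ⟨e1, he1, rfl⟩ := Finset.mem_image.mp ha
      obtain ⟨e2, he2, rfl⟩ := Finset.mem_image.mp hf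
      obtain ⟨he1E, hx1⟩ := hmemEx e1 he1
      obtain ⟨he2E, hx2⟩ := hmemEx e2 he2
      have hne : e1 ≠ e2 := fun h => haf (by rw [h])
      have hinter : e1.erase x ∩ e2.erase x = (e1 ∩ e2).erase x := by
        ext y
        simp only [Finset.mem_inter, Finset.mem_erase]
        tauto
      rw [hinter, Finset.card_erase_of_mem (Finset.mem_inter.mpr ⟨hx1, hx2⟩)]
      have := hint e1 he1E e2 he2E hne
      omega
    have hcard' : E'.card > (b + k).factorial * c ^ (k + 1) := by
      rw [hE'card]; exact hxdeg
    obtain ⟨P', hP'E', C', hsun', hP'c⟩ := ih E' huni' hint' hcard'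
    -- lift back
    refine ⟨P'.image (insert x), ?_, insert x C', ?_, ?_⟩
    · intro p hp
      obtain ⟨a, ha, rfl⟩ := Finset.mem_image.mp hp
      obtain ⟨e, he, rfl⟩ := Finset.mem_image.mp (hP'E' ha)
      obtain ⟨heE, hxe⟩ := hmemEx e he
      rwa [Finset.insert_erase hxe]
    · intro p hp q hq hpq
      obtain ⟨a, ha, rfl⟩ := Finset.mem_image.mp hp
      obtain ⟨a', ha', rfl⟩ := Finset.mem_image.mp hq
      have hab : a ≠ a' := fun h => hpq (by rw [h])
      have hC : a ∩ a' = C' := hsun' a ha a' ha' hab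
      ext y
      simp only [Finset.mem_inter, Finset.mem_insert, ← hC]
      tauto
    · have hxnot : ∀ a ∈ P', x ∉ a := by
        intro a ha
        obtain ⟨e, he, rfl⟩ := Finset.mem_image.mp (hP'E' ha)
        exact Finset.notMem_erase x e
      rw [Finset.card_image_of_injOn]
      · exact hP'c
      · intro a ha b' hb' hab
        have h : (insert x a).erase x = (insert x b').erase x := by rw [hab]
        rwa [Finset.erase_insert (hxnot a (Finset.mem_coe.mp ha)),
          Finset.erase_insert (hxnot b' (Finset.mem_coe.mp hb'))] at h

/-- Refined sunflower lemma: in an `ℓ`-uniform hypergraph whose hyperedges pairwise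
intersect in at most `ℓ - b` vertices (`1 ≤ b ≤ ℓ`), more than `ℓ! · c^(ℓ+1-b)`
hyperedges force a sunflower with more than `c` petals. -/
theorem refined_sunflower_lemma {α : Type*} [DecidableEq α]
    (E : Finset (Finset α)) (ℓ b c : ℕ) (hb1 : 1 ≤ b) (hbℓ : b ≤ ℓ)
    (huni : ∀ e ∈ E, e.card = ℓ)
    (hint : ∀ e ∈ E, ∀ f ∈ E, e ≠ f → (e ∩ f).card ≤ ℓ - b)
    (hcard : E.card > ℓ.factorial * c ^ (ℓ + 1 - b)) :
    ∃ P ⊆ E, ∃ C : Finset α, IsSunflower P C ∧ P.card > c := by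
  obtain ⟨k, rfl⟩ : ∃ k, ℓ = b + k := ⟨ℓ - b, by omega⟩
  refine refined_sunflower_aux b c hb1 k E (by simpa using huni) ?_ ?_
  · intro e he f hf hef
    have := hint e he f hf hef
    omega
  · have : b + k + 1 - b = k + 1 := by omega
    rw [this] at hcard
    exact hcard
end

section
/- Let H = (V, E) be a hypergraph and G = (V', E') with E' ⊆ E, V' = ⋃_{e∈E'} e, such that for every hyperedge e ∈ E \ E', there exists a nonempty set C ⊆ e and a sunflower in G with core C and at least k+1 petals. Then H has a hitting set of size at most k if and only if G has a hitting set of size at most k. -/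
/-- Correctness of the sunflower kernelization: if every hyperedge of `E` missing
from `E' ⊆ E` contains a nonempty core `C` of a sunflower in `E'` with at least
`k+1` petals, then `E` has a hitting set of size at most `k` iff `E'` does. -/
theorem sunflower_kernel_correct {α : Type*} [DecidableEq α]
    (E E' : Finset (Finset α)) (k : ℕ) (hsub : E' ⊆ E)
    (hred : ∀ e ∈ E, e ∉ E' → ∃ C : Finset α, C.Nonempty ∧ C ⊆ e ∧
      ∃ P ⊆ E', IsSunflower P C ∧ k + 1 ≤ P.card) :
    (∃ S : Finset α, S.card ≤ k ∧ ∀ e ∈ E, (S ∩ e).Nonempty) ↔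
      (∃ S : Finset α, S.card ≤ k ∧ ∀ e ∈ E', (S ∩ e).Nonempty) := by
  constructor
  · rintro ⟨S, hS, hhit⟩
    exact ⟨S, hS, fun e he => hhit e (hsub he)⟩
  · rintro ⟨S, hS, hhit⟩
    refine ⟨S, hS, fun e he => ?_⟩
    by_cases heE' : e ∈ E'
    · exact hhit e heE'
    obtain ⟨C, hCne, hCe, P, hPE', hsun, hPcard⟩ := hred e he heE'
    -- Show S ∩ C is nonempty
    by_cases hSC : (S ∩ C).Nonempty
    · obtain ⟨x, hx⟩ := hSC
      simp only [Finset.mem_inter] at hx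
      exact ⟨x, Finset.mem_inter.mpr ⟨hx.1, hCe hx.2⟩⟩
    · exfalso
      rw [Finset.not_nonempty_iff_eq_empty] at hSC
      -- choose a witness in S ∩ f for each f ∈ P
      have hw : ∀ f ∈ P, ∃ x, x ∈ S ∩ f := fun f hf => hhit f (hPE' hf)
      choose w hwmem using hw
      have hinj : Set.InjOn (fun f : {f // f ∈ P} => w f.1 f.2) Set.univ := by
        rintro ⟨f, hf⟩ - ⟨g, hg⟩ - hfg
        simp only at hfg
        by_contra hne
        have hne' : f ≠ g := fun h => hne (by simpa using h)
        have h1 := hwmem f hf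
        have h2 := hwmem g hg
        simp only [Finset.mem_inter] at h1 h2
        have : w f hf ∈ f ∩ g := Finset.mem_inter.mpr ⟨h1.2, hfg ▸ h2.2⟩
        rw [hsun f hf g hg hne'] at this
        have : w f hf ∈ S ∩ C := Finset.mem_inter.mpr ⟨h1.1, this⟩
        simp [hSC] at this
      have hcard : P.card ≤ S.card := by
        have : ∀ f : {f // f ∈ P}, w f.1 f.2 ∈ S := fun f =>
          (Finset.mem_inter.mp (hwmem f.1 f.2)).1
        calc P.card = Fintype.card {f // f ∈ P} := (Fintype.card_coe P).symm
          _ ≤ S.card := by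
              have h := Finset.card_le_card_of_injOn
                (s := (Finset.univ : Finset {f // f ∈ P})) (t := S)
                (fun f : {f // f ∈ P} => w f.1 f.2)
                (fun f _ => this f) (by
                  intro a ha b hb hab
                  exact hinj (Set.mem_univ a) (Set.mem_univ b) hab)
              simpa [Finset.card_univ] using h
      omega
end

section
/- Let G = (V, E) be an ℓ-uniform hypergraph with no sunflower of more than c petals. Then |E| ≤ ℓ! · c^ℓ. -/
private lemma sunflower_aux {α : Type*} [DecidableEq α] (c : ℕ) (hc : 1 ≤ c) :
    ∀ ℓ : ℕ, ∀ E : Finset (Finset α), (∀ e ∈ E, e.card = ℓ) →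
      (∀ P ⊆ E, ∀ C : Finset α, IsSunflower P C → P.card ≤ c) →
      E.card ≤ ℓ.factorial * c ^ ℓ := by
  intro ℓ
  induction ℓ with
  | zero =>
    intro E huni _
    have hsub : E ⊆ {∅} := by
      intro e he
      simp [Finset.card_eq_zero.1 (huni e he)]
    calc E.card ≤ ({∅} : Finset (Finset α)).card := Finset.card_le_card hsub
      _ = 1 := Finset.card_singleton _
      _ ≤ Nat.factorial 0 * c ^ 0 := by simp [Nat.factorial]
  | succ n ih =>
    intro E huni hsun
    classical
    set 𝒟 := E.powerset.filter (fun M => ∀ e ∈ M, ∀ f ∈ M, e ≠ f → e ∩ f = ∅) with h𝒟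
    have hemp : (∅ : Finset (Finset α)) ∈ 𝒟 := by simp [h𝒟]
    obtain ⟨M, hM𝒟, hMmax⟩ := 𝒟.exists_max_image Finset.card ⟨∅, hemp⟩
    have hMsub : M ⊆ E := Finset.mem_powerset.1 (Finset.mem_filter.1 hM𝒟).1
    have hMdisj : ∀ e ∈ M, ∀ f ∈ M, e ≠ f → e ∩ f = ∅ := (Finset.mem_filter.1 hM𝒟).2
    have hMc : M.card ≤ c := hsun M hMsub ∅ hMdisj
    set S := M.sup id with hSdef
    have hScard : S.card ≤ c * (n + 1) := by
      have h1 : S = M.biUnion id := Finset.sup_eq_biUnion M id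
      have h2 : (M.biUnion id).card ≤ ∑ e ∈ M, e.card := Finset.card_biUnion_le
      have h3 : ∑ e ∈ M, e.card = M.card * (n + 1) := by
        rw [Finset.sum_congr rfl (fun e he => huni e (hMsub he))]
        simp [mul_comm]
      calc S.card ≤ ∑ e ∈ M, e.card := h1 ▸ h2
        _ = M.card * (n + 1) := h3
        _ ≤ c * (n + 1) := Nat.mul_le_mul_right _ hMc
    have hmeet : ∀ e ∈ E, (e ∩ S).Nonempty := by
      intro e he
      by_contra h
      rw [Finset.not_nonempty_iff_eq_empty] at h
      have hdisj : ∀ f ∈ M, e ∩ f = ∅ := by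
        intro f hf
        have hfS : f ⊆ S := Finset.le_sup (f := id) hf
        have : e ∩ f ⊆ e ∩ S := Finset.inter_subset_inter Finset.Subset.rfl hfS
        rw [h] at this
        exact Finset.subset_empty.1 this
      have heM : e ∉ M := by
        intro heM
        have h1 : e ∩ e = ∅ := hdisj e heM
        rw [Finset.inter_self] at h1
        have := huni e he
        rw [h1] at this
        simp at this
      have hins : insert e M ∈ 𝒟 := by
        rw [h𝒟, Finset.mem_filter, Finset.mem_powerset]
        refine ⟨Finset.insert_subset he hMsub, ?_⟩
        intro a ha b hb hne
        rcases Finset.mem_insert.1 ha with rfl | ha' <;>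
          rcases Finset.mem_insert.1 hb with rfl | hb'
        · exact absurd rfl hne
        · exact hdisj b hb'
        · rw [Finset.inter_comm]; exact hdisj a ha'
        · exact hMdisj a ha' b hb' hne
      have := hMmax _ hins
      rw [Finset.card_insert_of_notMem heM] at this
      omega
    have hcover : E ⊆ S.biUnion (fun x => E.filter (fun e => x ∈ e)) := by
      intro e he
      obtain ⟨x, hx⟩ := hmeet e he
      rw [Finset.mem_inter] at hx
      exact Finset.mem_biUnion.2 ⟨x, hx.2, Finset.mem_filter.2 ⟨he, hx.1⟩⟩
    have key : ∀ x : α, (E.filter (fun e => x ∈ e)).card ≤ n.factorial * c ^ n := by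
      intro x
      set E' := (E.filter (fun e => x ∈ e)).image (fun e => e.erase x) with hE'
      have hinj : Set.InjOn (fun e : Finset α => e.erase x) ↑(E.filter (fun e => x ∈ e)) := by
        intro a ha b hb hab
        have hxa : x ∈ a := (Finset.mem_filter.1 ha).2
        have hxb : x ∈ b := (Finset.mem_filter.1 hb).2
        have : insert x (a.erase x) = insert x (b.erase x) := by
          simp only at hab; rw [hab]
        rwa [Finset.insert_erase hxa, Finset.insert_erase hxb] at this
      have hcard : (E.filter (fun e => x ∈ e)).card = E'.card :=
        (Finset.card_image_of_injOn hinj).symm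
      rw [hcard]
      apply ih E'
      · intro e' he'
        obtain ⟨e, he, rfl⟩ := Finset.mem_image.1 he'
        have hxe : x ∈ e := (Finset.mem_filter.1 he).2
        have : e.card = n + 1 := huni e (Finset.mem_filter.1 he).1
        simp [Finset.card_erase_of_mem hxe, this]
      · intro P' hP' C hC
        have hx' : ∀ p ∈ P', x ∉ p := by
          intro p hp
          obtain ⟨e, _, rfl⟩ := Finset.mem_image.1 (hP' hp)
          exact Finset.notMem_erase x e
        have hlift : ∀ p ∈ P', insert x p ∈ E := by
          intro p hp
          obtain ⟨e, he, rfl⟩ := Finset.mem_image.1 (hP' hp)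
          have hxe : x ∈ e := (Finset.mem_filter.1 he).2
          rw [Finset.insert_erase hxe]
          exact (Finset.mem_filter.1 he).1
        set P := P'.image (insert x) with hP
        have hPE : P ⊆ E := by
          intro q hq
          obtain ⟨p, hp, rfl⟩ := Finset.mem_image.1 hq
          exact hlift p hp
        have hPsun : IsSunflower P (insert x C) := by
          intro a ha b hb hne
          obtain ⟨p, hp, rfl⟩ := Finset.mem_image.1 ha
          obtain ⟨q, hq, rfl⟩ := Finset.mem_image.1 hb
          have hpq : p ≠ q := fun h => hne (by rw [h])
          have : insert x p ∩ insert x q = insert x (p ∩ q) := by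
            ext y; simp only [Finset.mem_inter, Finset.mem_insert]; tauto
          rw [this, hC p hp q hq hpq]
        have hPc : P.card ≤ c := hsun P hPE _ hPsun
        have hinj' : Set.InjOn (insert x) (↑P' : Set (Finset α)) := by
          intro a ha b hb hab
          have := hx' a ha
          have := hx' b hb
          have h1 : (insert x a).erase x = (insert x b).erase x := by rw [hab]
          rwa [Finset.erase_insert (hx' a ha), Finset.erase_insert (hx' b hb)] at h1
        have : P'.card = P.card := (Finset.card_image_of_injOn hinj').symm
        omega
    calc E.card ≤ (S.biUnion (fun x => E.filter (fun e => x ∈ e))).card :=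
          Finset.card_le_card hcover
      _ ≤ ∑ x ∈ S, (E.filter (fun e => x ∈ e)).card := Finset.card_biUnion_le
      _ ≤ ∑ _x ∈ S, n.factorial * c ^ n := Finset.sum_le_sum (fun x _ => key x)
      _ = S.card * (n.factorial * c ^ n) := by rw [Finset.sum_const, smul_eq_mul]
      _ ≤ (c * (n + 1)) * (n.factorial * c ^ n) :=
          Nat.mul_le_mul_right _ hScard
      _ = (n + 1).factorial * c ^ (n + 1) := by
          rw [Nat.factorial_succ, pow_succ]; ring

/-- Contrapositive of the Erdős–Rado sunflower lemma: an `ℓ`-uniform hypergraph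
with no sunflower of more than `c` petals has at most `ℓ! · c^ℓ` hyperedges. -/
theorem sunflower_free_bound {α : Type*} [DecidableEq α]
    (E : Finset (Finset α)) (ℓ c : ℕ)
    (huni : ∀ e ∈ E, e.card = ℓ)
    (hsun : ∀ P ⊆ E, ∀ C : Finset α, IsSunflower P C → P.card ≤ c) :
    E.card ≤ ℓ.factorial * c ^ ℓ := by
  rcases Nat.eq_zero_or_pos c with rfl | hc
  · have hE : E = ∅ := by
      by_contra h
      obtain ⟨e, he⟩ := Finset.nonempty_of_ne_empty h
      have : ({e} : Finset (Finset α)).card ≤ 0 := by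
        apply hsun {e} (Finset.singleton_subset_iff.2 he) ∅
        intro a ha b hb hne
        rw [Finset.mem_singleton] at ha hb
        exact absurd (ha.trans hb.symm) hne
      simp at this
    simp [hE]
  · exact sunflower_aux c hc ℓ E huni hsun
end

section
/- Let H = (V, E) be a hypergraph with hyperedges of cardinality at most d in which every sunflower (whose core is not a petal) has at most d·(k+1) petals, and let W ⊆ E be a set of hyperedges such that every pair of distinct hyperedges in W intersects in at most d−2 vertices. Then |W| ≤ d! · d^d · (k+1)^(d−1). -/
/-!
Split `W` into layers `W_ℓ` of edges of size `ℓ ≤ d`, and let `c = d (k + 1)`. A layer is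
`ℓ`-uniform with pairwise intersections of size `< d - 1`. In such a family a maximal subfamily of
pairwise disjoint edges is a sunflower with empty core, so its union has at most `ℓ c` vertices
and meets every edge; hence some vertex lies in at least a `1 / (ℓ c)` fraction of the edges. Its
link is again sunflower-bounded by `c`, with `ℓ` and the intersection bound both lowered by one,
so induction gives `|W_ℓ| ≤ ℓ! c^(d-1)`. Since `∑_{ℓ<d} ℓ! ≤ d!`, summing the layers gives
`|W| ≤ 2 d! c^(d-1) ≤ d · d! c^(d-1)`.
-/

open Finset Nat

section

variable {α : Type*} [DecidableEq α]

def SunflowerBounded (F : Finset (Finset α)) (c : ℕ) : Prop :=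
  ∀ P ⊆ F, ∀ C : Finset α, IsSunflower P C → C ∉ P → #P ≤ c

def Finset.link (F : Finset (Finset α)) (x : α) : Finset (Finset α) :=
  {e ∈ F | x ∈ e}.image (·.erase x)

lemma isSunflower_empty_iff {P : Finset (Finset α)} :
    IsSunflower P ∅ ↔ (P : Set (Finset α)).PairwiseDisjoint id := by
  simp only [IsSunflower, Set.PairwiseDisjoint, Set.Pairwise, mem_coe, Function.onFun, id,
    disjoint_iff_inter_eq_empty]

lemma SunflowerBounded.mono {F F' : Finset (Finset α)} {c : ℕ} (h : SunflowerBounded F c)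
    (hF' : F' ⊆ F) : SunflowerBounded F' c :=
  fun P hP => h P (hP.trans hF')

lemma SunflowerBounded.exists_transversal {F : Finset (Finset α)} {c m : ℕ}
    (h : SunflowerBounded F c) (hF : ∀ e ∈ F, #e ≤ m) (hempty : ∅ ∉ F) :
    ∃ U : Finset α, #U ≤ m * c ∧ ∀ e ∈ F, ¬Disjoint U e := by
  classical
  obtain ⟨D, hD, hDmax⟩ := exists_max_image
    (F.powerset.filter fun D : Finset (Finset α) => (D : Set (Finset α)).PairwiseDisjoint id)
    card ⟨∅, by simp⟩
  simp only [mem_filter, mem_powerset] at hD hDmax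
  obtain ⟨hDF, hDdisj⟩ := hD
  refine ⟨D.biUnion id, ?_, fun e he hdisj => ?_⟩
  · have hDc : #D ≤ c :=
      h D hDF ∅ (isSunflower_empty_iff.2 hDdisj) fun h0 => hempty (hDF h0)
    calc #(D.biUnion id) ≤ ∑ e ∈ D, #e := card_biUnion_le
      _ ≤ #D • m := sum_le_card_nsmul _ _ _ fun e he => hF e (hDF he)
      _ ≤ m * c := by rw [smul_eq_mul, mul_comm]; exact Nat.mul_le_mul_left m hDc
  · have hsub : ∀ f ∈ D, f ⊆ D.biUnion id := fun f hf => subset_biUnion_of_mem id hf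
    have heD : e ∉ D := fun heD =>
      hempty ((disjoint_self_iff_empty e).1 (hdisj.mono_left (hsub e heD)) ▸ he)
    have hins := hDmax (insert e D) ⟨insert_subset he hDF, by
      rw [coe_insert]
      exact hDdisj.insert fun f hf _ => (hdisj.mono_left (hsub f hf)).symm⟩
    rw [card_insert_of_notMem heD] at hins
    omega

lemma exists_card_le_mul_card_filter_mem {F : Finset (Finset α)} {U : Finset α}
    (hne : F.Nonempty) (hU : ∀ e ∈ F, ¬Disjoint U e) :
    ∃ x ∈ U, #F ≤ #U * #{e ∈ F | x ∈ e} := by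
  obtain ⟨e₀, he₀⟩ := hne
  have hUne : U.Nonempty := (not_disjoint_iff_nonempty_inter.1 (hU e₀ he₀)).mono inter_subset_left
  have hcover : #F ≤ ∑ x ∈ U, #{e ∈ F | x ∈ e} := by
    refine (card_le_card fun e he => ?_).trans card_biUnion_le
    obtain ⟨x, hx⟩ := not_disjoint_iff_nonempty_inter.1 (hU e he)
    exact mem_biUnion.2 ⟨x, (mem_inter.1 hx).1, mem_filter.2 ⟨he, (mem_inter.1 hx).2⟩⟩
  refine exists_le_of_sum_le hUne ?_
  rw [sum_const, smul_eq_mul, ← mul_sum]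
  exact Nat.mul_le_mul_left _ hcover

lemma Finset.card_link (F : Finset (Finset α)) (x : α) : #(F.link x) = #{e ∈ F | x ∈ e} :=
  card_image_of_injOn ((erase_injOn' x).mono fun _ he => (mem_filter.1 he).2)

lemma Finset.sized_link {F : Finset (Finset α)} {m : ℕ} (x : α)
    (hF : (F : Set (Finset α)).Sized (m + 1)) : (F.link x : Set (Finset α)).Sized m := by
  intro e he
  obtain ⟨f, hf, rfl⟩ := mem_image.1 he
  rw [mem_filter] at hf
  rw [card_erase_of_mem hf.2, hF hf.1, Nat.add_sub_cancel]

lemma Finset.pairwise_card_inter_link_lt {F : Finset (Finset α)} {s : ℕ} (x : α)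
    (hF : (F : Set (Finset α)).Pairwise fun e f => #(e ∩ f) < s + 1) :
    (F.link x : Set (Finset α)).Pairwise fun e f => #(e ∩ f) < s := by
  intro e he f hf hef
  obtain ⟨e, he', rfl⟩ := mem_image.1 (mem_coe.1 he)
  obtain ⟨f, hf', rfl⟩ := mem_image.1 (mem_coe.1 hf)
  rw [mem_filter] at he' hf'
  have hlt : #(e ∩ f) < s + 1 := hF he'.1 hf'.1 fun h => hef (h ▸ rfl)
  have hx : x ∈ e ∩ f := mem_inter.2 ⟨he'.2, hf'.2⟩
  have := card_pos.2 ⟨x, hx⟩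
  rw [erase_inter, inter_erase, erase_idem, card_erase_of_mem hx]
  omega

/-- A sunflower in the link with at least two petals lifts, by adding `x` back to every petal and
to the core, to a sunflower in `F`. -/
lemma SunflowerBounded.link {F : Finset (Finset α)} {c : ℕ} (hc : 1 ≤ c)
    (h : SunflowerBounded F c) (x : α) : SunflowerBounded (F.link x) c := by
  intro P hP C hsun hC
  obtain hP1 | ⟨e₁, he₁, e₂, he₂, he₁₂⟩ := le_or_gt #P 1 |>.imp_right one_lt_card.1
  · exact hP1.trans hc
  have hxP : ∀ e ∈ P, x ∉ e := fun e he => by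
    obtain ⟨f, -, rfl⟩ := mem_image.1 (hP he)
    exact notMem_erase x f
  have hxC : x ∉ C := hsun e₁ he₁ e₂ he₂ he₁₂ ▸ fun hx => hxP e₁ he₁ (mem_inter.1 hx).1
  have hinsert_inj : ∀ a, x ∉ a → ∀ b, x ∉ b → insert x a = insert x b → a = b :=
    fun a ha b hb hab => by rw [← erase_insert ha, hab, erase_insert hb]
  have hcard := Finset.card_image_of_injOn (s := P) fun a ha b hb =>
    hinsert_inj a (hxP a ha) b (hxP b hb)
  refine hcard ▸ h _ ?_ (insert x C) ?_ ?_
  · intro a ha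
    obtain ⟨e, he, rfl⟩ := mem_image.1 ha
    obtain ⟨f, hf, rfl⟩ := mem_image.1 (hP he)
    rw [mem_filter] at hf
    rw [insert_erase hf.2]
    exact hf.1
  · intro a ha b hb hab
    obtain ⟨e, he, rfl⟩ := mem_image.1 ha
    obtain ⟨f, hf, rfl⟩ := mem_image.1 hb
    rw [← insert_inter_distrib, hsun e he f hf fun hef => hab (hef ▸ rfl)]
  · intro hmem
    obtain ⟨e, he, heC⟩ := mem_image.1 hmem
    exact hC (hinsert_inj e (hxP e he) C hxC heC ▸ he)

theorem SunflowerBounded.card_le_factorial_mul_pow {c : ℕ} (hc : 1 ≤ c) :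
    ∀ {s m : ℕ} {F : Finset (Finset α)}, SunflowerBounded F c →
      (F : Set (Finset α)).Sized m →
      (F : Set (Finset α)).Pairwise (fun e f => #(e ∩ f) < s) →
      #F ≤ m ! * c ^ s
  | 0, m, F, _, _, hinter => by
    have : #F ≤ 1 := card_le_one.2 fun e he f hf => by
      by_contra hef
      exact Nat.not_lt_zero _ (hinter he hf hef)
    simpa using this.trans m.factorial_pos
  | s + 1, 0, F, _, hsized, _ => by
    have : #F ≤ 1 := card_le_one.2 fun e he f hf => by
      rw [card_eq_zero.1 (hsized he), card_eq_zero.1 (hsized hf)]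
    simpa using this.trans (Nat.one_le_pow _ _ hc)
  | s + 1, m + 1, F, h, hsized, hinter => by
    obtain rfl | hne := F.eq_empty_or_nonempty
    · simp
    have hempty : ∅ ∉ F := fun h0 => by simpa using hsized h0
    obtain ⟨U, hUcard, hU⟩ := h.exists_transversal (fun e he => (hsized he).le) hempty
    obtain ⟨x, -, hx⟩ := exists_card_le_mul_card_filter_mem hne hU
    have hlink : #(F.link x) ≤ m ! * c ^ s :=
      (h.link hc x).card_le_factorial_mul_pow hc (sized_link x hsized)
        (pairwise_card_inter_link_lt x hinter)
    calc #F ≤ (m + 1) * c * #(F.link x) := by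
          rw [card_link]; exact hx.trans (Nat.mul_le_mul_right _ hUcard)
      _ ≤ (m + 1) * c * (m ! * c ^ s) := Nat.mul_le_mul_left _ hlink
      _ = (m + 1)! * c ^ (s + 1) := by rw [factorial_succ, pow_succ]; ring

end

lemma sum_range_factorial_le (n : ℕ) : ∑ i ∈ range n, i ! ≤ n ! := by
  rcases n.eq_zero_or_pos with rfl | hn
  · simp
  calc ∑ i ∈ range n, i ! ≤ #(range n) • (n - 1)! :=
        sum_le_card_nsmul _ _ _ fun i hi => factorial_le (Nat.le_sub_one_of_lt (mem_range.1 hi))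
    _ = n ! := by rw [card_range, smul_eq_mul, mul_factorial_pred hn.ne']

/-- In a hypergraph with hyperedges of size at most `d` (`d ≥ 2`) in which every
sunflower whose core is not a petal has at most `d·(k+1)` petals, every weakly
related set `W` (pairwise intersections of size at most `d-2`) satisfies
`|W| ≤ d! · d^d · (k+1)^(d-1)`. -/
theorem weakly_related_set_bound {α : Type*} [DecidableEq α]
    (E W : Finset (Finset α)) (d k : ℕ) (hd : 2 ≤ d)
    (hcard : ∀ e ∈ E, e.card ≤ d)
    (hsun : ∀ P ⊆ E, ∀ C : Finset α, IsSunflower P C → C ∉ P → P.card ≤ d * (k + 1))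
    (hW : W ⊆ E)
    (hwr : ∀ e ∈ W, ∀ f ∈ W, e ≠ f → (e ∩ f).card ≤ d - 2) :
    W.card ≤ d.factorial * d ^ d * (k + 1) ^ (d - 1) := by
  set c := d * (k + 1)
  have hc : 1 ≤ c := Nat.one_le_iff_ne_zero.2 (by positivity)
  have hlayer (ℓ : ℕ) : #{e ∈ W | #e = ℓ} ≤ ℓ ! * c ^ (d - 1) :=
    SunflowerBounded.card_le_factorial_mul_pow hc (SunflowerBounded.mono hsun
      ((filter_subset _ _).trans hW)) (fun e he => (mem_filter.1 he).2)
      fun e he f hf hef => by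
        have := hwr e (mem_filter.1 he).1 f (mem_filter.1 hf).1 hef
        omega
  obtain ⟨n, rfl⟩ : ∃ n, d = n + 1 := ⟨d - 1, by omega⟩
  calc #W = ∑ ℓ ∈ range (n + 2), #{e ∈ W | #e = ℓ} :=
        card_eq_sum_card_fiberwise fun e he => mem_range.2 (Nat.lt_succ_of_le (hcard e (hW he)))
    _ ≤ ∑ ℓ ∈ range (n + 2), ℓ ! * c ^ n := sum_le_sum fun ℓ _ => hlayer ℓ
    _ = (∑ ℓ ∈ range (n + 1), ℓ ! + (n + 1)!) * c ^ n := by rw [sum_range_succ, add_mul, sum_mul]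
    _ ≤ 2 * (n + 1)! * c ^ n := by rw [two_mul]; gcongr; exact sum_range_factorial_le _
    _ ≤ (n + 1) * (n + 1)! * c ^ n := by gcongr
    _ = (n + 1)! * (n + 1) ^ (n + 1) * (k + 1) ^ (n + 1 - 1) := by
        rw [Nat.add_sub_cancel, mul_pow, pow_succ]; ring
end

section
/- Let (V, E, k) be an instance of d-Hitting Set and let S' be obtained by repeatedly deleting a petal of some sunflower with at least k+2 petals until no sunflower of size k+2 remains, yielding hypergraph G. Then G has exactly the same inclusion-minimal hitting sets of size at most k as H = (V, E). -/
/-- One step of the sunflower reduction: delete a petal of a sunflower with at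
least `k+2` petals. -/
def PetalStep {α : Type*} [DecidableEq α] (k : ℕ) (E E' : Finset (Finset α)) : Prop :=
  ∃ P ⊆ E, ∃ C : Finset α, IsSunflower P C ∧ k + 2 ≤ P.card ∧ ∃ e ∈ P, E' = E.erase e

/-- An inclusion-minimal hitting set of size at most `k`. -/
def IsMinHittingSet {α : Type*} [DecidableEq α]
    (E : Finset (Finset α)) (k : ℕ) (S : Finset α) : Prop :=
  S.card ≤ k ∧ (∀ e ∈ E, (S ∩ e).Nonempty) ∧ ∀ T ⊂ S, ¬ ∀ e ∈ E, (T ∩ e).Nonempty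

/-!
A set `S` with `|S| ≤ k` that avoids the core of a sunflower hits each petal in a private
vertex, so it hits at most `k` petals. Hence if `S` hits the `≥ k + 1` remaining petals of a
sunflower with `≥ k + 2` petals, it meets the core and therefore also the deleted petal. So a
petal deletion does not change which sets of size at most `k` are hitting sets, and thus
does not change the inclusion-minimal ones either.
-/

namespace IsSunflower

variable {α : Type*} [DecidableEq α] {P : Finset (Finset α)} {C S : Finset α}

theorem mono {Q : Finset (Finset α)} (hsun : IsSunflower P C) (hQ : Q ⊆ P) :
    IsSunflower Q C :=
  fun e he f hf hef => hsun e (hQ he) f (hQ hf) hef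

theorem core_subset {e f : Finset α} (hsun : IsSunflower P C) (he : e ∈ P) (hf : f ∈ P)
    (hef : e ≠ f) : C ⊆ e :=
  hsun e he f hf hef ▸ Finset.inter_subset_left

theorem card_le_of_disjoint_core (hsun : IsSunflower P C) (hSC : Disjoint S C)
    (hhit : ∀ f ∈ P, (S ∩ f).Nonempty) : P.card ≤ S.card := by
  refine Finset.card_le_card_of_forall_subsingleton (fun f x => x ∈ f)
    (fun f hf => (hhit f hf).imp fun _ => Finset.mem_inter.mp) ?_
  rintro x hxS a ⟨ha, hxa⟩ b ⟨hb, hxb⟩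
  by_contra hab
  have hxC : x ∈ C := hsun a ha b hb hab ▸ Finset.mem_inter.mpr ⟨hxa, hxb⟩
  exact Finset.disjoint_left.mp hSC hxS hxC

theorem inter_nonempty_of_hits_erase {e : Finset α} (hsun : IsSunflower P C)
    (hcard : S.card + 2 ≤ P.card) (he : e ∈ P) (hhit : ∀ f ∈ P.erase e, (S ∩ f).Nonempty) :
    (S ∩ e).Nonempty := by
  have hcard' : S.card < (P.erase e).card := by
    rw [Finset.card_erase_of_mem he]; omega
  obtain ⟨x, hxS, hxC⟩ := Finset.not_disjoint_iff.mp fun hSC =>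
    hcard'.not_ge ((hsun.mono (Finset.erase_subset e P)).card_le_of_disjoint_core hSC hhit)
  obtain ⟨f, hf⟩ : (P.erase e).Nonempty := Finset.card_pos.mp (by omega)
  have hCe : C ⊆ e :=
    hsun.core_subset he (Finset.mem_of_mem_erase hf) (Finset.ne_of_mem_erase hf).symm
  exact ⟨x, Finset.mem_inter.mpr ⟨hxS, hCe hxC⟩⟩

end IsSunflower

section HittingSets

variable {α : Type*} [DecidableEq α] {E E' : Finset (Finset α)} {k : ℕ}

theorem PetalStep.hits_iff (h : PetalStep k E E') {T : Finset α} (hT : T.card ≤ k) :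
    (∀ f ∈ E, (T ∩ f).Nonempty) ↔ ∀ f ∈ E', (T ∩ f).Nonempty := by
  obtain ⟨P, hPE, C, hsun, hPcard, e, heP, rfl⟩ := h
  refine ⟨fun hhit f hf => hhit f (Finset.mem_of_mem_erase hf), fun hhit f hf => ?_⟩
  by_cases hfe : f = e
  · subst hfe
    refine hsun.inter_nonempty_of_hits_erase (by omega) heP fun g hg => hhit g ?_
    exact Finset.mem_erase.mpr ⟨Finset.ne_of_mem_erase hg, hPE (Finset.mem_of_mem_erase hg)⟩
  · exact hhit f (Finset.mem_erase.mpr ⟨hfe, hf⟩)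

theorem isMinHittingSet_congr
    (h : ∀ T : Finset α, T.card ≤ k →
      ((∀ f ∈ E, (T ∩ f).Nonempty) ↔ ∀ f ∈ E', (T ∩ f).Nonempty))
    (S : Finset α) : IsMinHittingSet E k S ↔ IsMinHittingSet E' k S := by
  refine and_congr_right fun hS => and_congr (h S hS) (forall₂_congr fun T hT => ?_)
  rw [h T ((Finset.card_le_card hT.subset).trans hS)]

end HittingSets

theorem petal_deletion_full_kernel_general {α : Type*} [DecidableEq α]
    (E G : Finset (Finset α)) (k : ℕ)
    (hsteps : Relation.ReflTransGen (PetalStep k) E G) :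
    ∀ S : Finset α, IsMinHittingSet E k S ↔ IsMinHittingSet G k S := by
  intro S
  induction hsteps with
  | refl => rfl
  | tail _ step ih => exact ih.trans (isMinHittingSet_congr (fun _ hT => step.hits_iff hT) S)

/-- Full-kernel property: repeatedly deleting a petal of a sunflower with at least
`k+2` petals, until no sunflower of size `k+2` remains, preserves exactly the
inclusion-minimal hitting sets of size at most `k`. -/
theorem petal_deletion_full_kernel {α : Type*} [DecidableEq α]
    (E G : Finset (Finset α)) (k : ℕ)
    (hsteps : Relation.ReflTransGen (PetalStep k) E G)
    (hdone : ∀ P ⊆ G, ∀ C : Finset α, IsSunflower P C → P.card ≤ k + 1) :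
    ∀ S : Finset α, IsMinHittingSet E k S ↔ IsMinHittingSet G k S :=
  petal_deletion_full_kernel_general E G k hsteps
end
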